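/- arXiv:0903.4994 — 2 statements merged into one kernel-verified Lean document; each statement's English description precedes it below -/
import Mathlib

section
/- For the simple algebra d₁ = ψ_e^{ef} − ψ_e^{fe} + ψ_f^{ee} − ψ_f^{ff} on a 1|1-dimensional space, the Hochschild cohomology is H⁰(d₁) = ⟨φ_f⟩ (dimension 1) and Hⁿ(d₁) = 0 for all n ≥ 1. -/
/-! Framework: the `1|1`-dimensional complex graded vector space `W = ⟨e,f⟩`
(`false` denotes the even basis element `e`, `true` the odd basis element `f`),
Hochschild cochains in coefficient form, and the Hochschild coboundary
`D(φ) = [d,φ]` given by the graded commutator of coderivations on `T(W)`. -/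

/-- A degree-`n` multi-index of basis elements of `W`. -/
abbrev Idx (n : ℕ) := Fin n → Bool

/-- A degree-`n` Hochschild cochain `Cⁿ(W) = Hom(W^⊗n, W)`, recorded by its
coefficients: `φ J i` is the coefficient of `w_i` in `φ(w_J)`. -/
abbrev Cochain (n : ℕ) := Idx n → Bool → ℂ

/-- Parity (0 or 1) of a basis element: `e = false` is even, `f = true` is odd. -/
def pb (b : Bool) : ℕ := if b then 1 else 0

/-- Total parity count of a multi-index. -/
def pc {n : ℕ} (J : Idx n) : ℕ := ∑ i, pb (J i)

/-- Parity count of the length-`t` prefix of a multi-index. -/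
def pcP {n : ℕ} (J : Idx n) (t : ℕ) : ℕ :=
  ∑ i ∈ Finset.univ.filter (fun i : Fin n => i.val < t), pb (J i)

/-- The sign `(−1)^m`. -/
noncomputable def msign (m : ℕ) : ℂ := (-1) ^ m

/-- Replace the adjacent pair of entries at positions `k, k+1` of `J` by the single entry `j`. -/
def repl {n : ℕ} (J : Idx (n + 1)) (k : Fin n) (j : Bool) : Idx n :=
  fun i => if i.val < k.val then J i.castSucc else if i.val = k.val then j else J i.succ

/-- The coderivation `ψ_i^{ab} ∈ Hom(W⊗W, W)` sending `w_a ⊗ w_b` to `w_i`,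
in coefficient form: `delta2 a b i x y j` is the coefficient of `w_j` in `ψ_i^{ab}(w_x ⊗ w_y)`. -/
noncomputable def delta2 (a b i : Bool) : Bool → Bool → Bool → ℂ :=
  fun x y j => if x = a ∧ y = b ∧ j = i then 1 else 0

/-- The Hochschild coboundary `D(φ) = [d, φ] = d∘φ − (−1)^{|φ|} φ∘d` of a cochain
`φ ∈ Cⁿ(W)` with respect to an odd quadratic codifferential `d`, with the usual
Koszul signs for insertions of coderivations. -/
noncomputable def Dmap (d : Bool → Bool → Bool → ℂ) {n : ℕ} (φ : Cochain n) :
    Cochain (n + 1) := fun J i =>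
  (∑ j : Bool, φ (fun k => J k.castSucc) j * d j (J (Fin.last n)) i)
    + (∑ j : Bool, msign ((pc (fun k : Fin n => J k.succ) + pb j) * pb (J 0)) *
        (φ (fun k => J k.succ) j * d (J 0) j i))
    - ∑ k : Fin n, ∑ j : Bool,
        msign (pc (repl J k j) + pb i + pcP J k.val) *
          (φ (repl J k j) i * d (J k.castSucc) (J k.succ) j)

/-- The Hochschild coboundary as a linear map `Cⁿ(W) →ₗ Cⁿ⁺¹(W)`. -/
noncomputable def Dlin (d : Bool → Bool → Bool → ℂ) (n : ℕ) :
    Cochain n →ₗ[ℂ] Cochain (n + 1) where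
  toFun := Dmap d
  map_add' φ ψ := by
    funext J i
    simp only [Dmap, Pi.add_apply, mul_add, add_mul, Finset.sum_add_distrib]
    ring
  map_smul' c φ := by
    funext J i
    simp only [Dmap, Pi.smul_apply, smul_eq_mul, RingHom.id_apply, mul_add, mul_sub,
      Finset.mul_sum, mul_assoc, mul_left_comm]

/-- Hochschild cocycles: `ker (D : Cⁿ → Cⁿ⁺¹)`. -/
noncomputable def Zsp (d : Bool → Bool → Bool → ℂ) (n : ℕ) : Submodule ℂ (Cochain n) :=
  LinearMap.ker (Dlin d n)

/-- Hochschild coboundaries: `im (D : Cⁿ⁻¹ → Cⁿ)` (there are none in degree `0`). -/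
noncomputable def Bsp (d : Bool → Bool → Bool → ℂ) : (n : ℕ) → Submodule ℂ (Cochain n)
  | 0 => ⊥
  | (n + 1) => LinearMap.range (Dlin d n)

/-- The Hochschild cohomology `Hⁿ(d) = ker D / im D`. -/
abbrev Hsp (d : Bool → Bool → Bool → ℂ) (n : ℕ) :=
  (Zsp d n) ⧸ (Submodule.comap (Zsp d n).subtype (Bsp d n))

/-- The basis cochain `φ^I_i`, sending `w_I` to `w_i` and other basis tensors to `0`. -/
noncomputable def bC {n : ℕ} (I : Idx n) (i : Bool) : Cochain n :=
  fun J j => if J = I ∧ j = i then 1 else 0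

/-- `φ_e^{eⁿ}`: the cochain sending `e^⊗n` to `e` and all other basis tensors to `0`. -/
noncomputable def phiE (n : ℕ) : Cochain n := bC (fun _ => false) false

/-- `φ_f^{eⁿ}`: the cochain sending `e^⊗n` to `f` and all other basis tensors to `0`. -/
noncomputable def phiF (n : ℕ) : Cochain n := bC (fun _ => false) true

/-- `d₁ = ψ_e^{ef} − ψ_e^{fe} + ψ_f^{ee} − ψ_f^{ff}`. -/
noncomputable def dd1 : Bool → Bool → Bool → ℂ :=
  fun a b i => delta2 false true false a b i - delta2 true false false a b i
    + delta2 false false true a b i - delta2 true true true a b i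

/-- `d₂ = ψ_f^{ff}`. -/
noncomputable def dd2 : Bool → Bool → Bool → ℂ := delta2 true true true

/-- `d₃ = ψ_e^{ef} − ψ_f^{ff}`. -/
noncomputable def dd3 : Bool → Bool → Bool → ℂ :=
  fun a b i => delta2 false true false a b i - delta2 true true true a b i

/-- `d₄ = ψ_e^{fe} + ψ_f^{ff}`. -/
noncomputable def dd4 : Bool → Bool → Bool → ℂ :=
  fun a b i => delta2 true false false a b i + delta2 true true true a b i

/-- `d₅ = ψ_e^{ef} − ψ_e^{fe} − ψ_f^{ff}`. -/
noncomputable def dd5 : Bool → Bool → Bool → ℂ :=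
  fun a b i => delta2 false true false a b i - delta2 true false false a b i
    - delta2 true true true a b i

/-- `d₆ = ψ_f^{ee}`. -/
noncomputable def dd6 : Bool → Bool → Bool → ℂ := delta2 false false true

-- ===== auxiliary development =====

lemma msign_add (a b : ℕ) : msign (a + b) = msign a * msign b := by
  simp [msign, pow_add]

lemma msign_mul_self (a : ℕ) : msign a * msign a = 1 := by
  rw [← msign_add]; exact Even.neg_one_pow ⟨a, rfl⟩

lemma pb_false : pb false = 0 := rfl
lemma pb_true : pb true = 1 := rfl

lemma msign_zero : msign 0 = 1 := by simp [msign]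
lemma msign_one : msign 1 = -1 := by simp [msign]

lemma snoc_zero' {n : ℕ} (J : Idx (n + 1)) (a : Bool) :
    (Fin.snoc J a : Idx (n + 2)) 0 = J 0 := by
  have h : (0 : Fin (n + 2)) = Fin.castSucc 0 := rfl
  rw [h, Fin.snoc_castSucc]

lemma snoc_succ {n : ℕ} (J : Idx (n + 1)) (a : Bool) :
    (fun k : Fin (n + 1) => (Fin.snoc J a : Idx (n + 2)) k.succ)
      = Fin.snoc (fun k : Fin n => J k.succ) a := by
  funext t
  refine Fin.lastCases ?_ (fun t => ?_) t
  · simp [Fin.succ_last]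
  · rw [Fin.succ_castSucc, Fin.snoc_castSucc, Fin.snoc_castSucc]

lemma repl_snoc_castSucc {n : ℕ} (J : Idx (n + 1)) (a j : Bool) (k : Fin n) :
    repl (Fin.snoc J a) k.castSucc j = Fin.snoc (repl J k j) a := by
  funext t
  refine Fin.lastCases ?_ (fun t => ?_) t
  · have h1 : ¬ ((Fin.last n).val < (k.castSucc : Fin (n+1)).val) := by
      simp only [Fin.val_last, Fin.coe_castSucc]; omega
    have h2 : ¬ ((Fin.last n).val = (k.castSucc : Fin (n+1)).val) := by
      simp only [Fin.val_last, Fin.coe_castSucc]; omega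
    simp only [repl, h1, h2, if_false, Fin.succ_last, Fin.snoc_last]
  · simp only [repl, Fin.coe_castSucc, Fin.snoc_castSucc]
    rcases lt_trichotomy t.val k.val with h | h | h
    · simp only [h, if_true, Fin.snoc_castSucc]
    · simp [h]
    · have h1 : ¬ (t.val < k.val) := by omega
      have h2 : ¬ (t.val = k.val) := by omega
      simp only [h1, h2, if_false, Fin.succ_castSucc, Fin.snoc_castSucc]

lemma repl_snoc_last {n : ℕ} (J : Idx (n + 1)) (a j : Bool) :
    repl (Fin.snoc J a) (Fin.last n) j = Fin.snoc (fun k : Fin n => J k.castSucc) j := by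
  funext t
  refine Fin.lastCases ?_ (fun t => ?_) t
  · simp [repl]
  · have h1 : t.castSucc.val < (Fin.last n).val := t.isLt
    simp only [repl, h1, if_true, Fin.snoc_castSucc]

lemma pc_snoc {n : ℕ} (J : Idx n) (a : Bool) :
    pc (Fin.snoc J a : Idx (n + 1)) = pc J + pb a := by
  simp [pc, Fin.sum_univ_castSucc]

lemma pcP_snoc {n : ℕ} (J : Idx (n + 1)) (a : Bool) (t : ℕ) (h : t ≤ n + 1) :
    pcP (Fin.snoc J a : Idx (n + 2)) t = pcP J t := by
  rw [pcP, pcP, Finset.sum_filter, Finset.sum_filter, Fin.sum_univ_castSucc]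
  have hl : ¬ ((Fin.last (n + 1)).val < t) := by simp only [Fin.val_last]; omega
  simp [hl, Fin.snoc_castSucc]
  intro hc; omega

lemma pcP_top {n : ℕ} (J : Idx (n + 1)) :
    pc (fun k : Fin n => J k.castSucc) = pcP J n := by
  rw [pcP, Finset.sum_filter, Fin.sum_univ_castSucc]
  have hl : ¬ ((Fin.last n).val < n) := by simp
  simp [hl, pc, Fin.is_lt]

lemma msign_sq (a : ℕ) : msign a ^ 2 = 1 := by rw [sq, msign_mul_self]

lemma pcP_snoc_lt {n : ℕ} (J : Idx (n + 1)) (a : Bool) (x : Fin n) :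
    pcP (Fin.snoc J a : Idx (n + 2)) x.val = pcP J x.val := pcP_snoc J a _ (by omega)

lemma pcP_snoc_n {n : ℕ} (J : Idx (n + 1)) (a : Bool) :
    pcP (Fin.snoc J a : Idx (n + 2)) n = pcP J n := pcP_snoc J a _ (by omega)

noncomputable def hC {n : ℕ} (φ : Cochain (n + 1)) : Cochain n :=
  fun J i => msign (pb i) * (2⁻¹ : ℂ) * ∑ a : Bool, φ (Fin.snoc J a) (!(a.xor i))

lemma Dsnoc {n : ℕ} (φ : Cochain (n + 1)) (J : Idx (n + 1)) (a m : Bool) :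
    Dmap dd1 φ (Fin.snoc J a) m =
      (∑ j : Bool, φ J j * dd1 j a m)
      + (∑ j : Bool, msign ((pc (fun k : Fin n => J k.succ) + pb a + pb j) * pb (J 0)) *
          (φ (Fin.snoc (fun k : Fin n => J k.succ) a) j * dd1 (J 0) j m))
      - (∑ j : Bool, msign (pb j + pb m) *
          (φ (Fin.snoc (fun k : Fin n => J k.castSucc) j) m * dd1 (J (Fin.last n)) a j))
      - ∑ k : Fin n, ∑ j : Bool,
          msign ((pc (repl J k j) + pb a) + pb m + pcP J k.val) *
            (φ (Fin.snoc (repl J k j) a) m * dd1 (J k.castSucc) (J k.succ) j) := by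
  simp only [Dmap]
  rw [Fin.sum_univ_castSucc (n := n)]
  simp only [Fin.snoc_castSucc, Fin.snoc_last, Fin.succ_last, snoc_zero', snoc_succ,
    repl_snoc_castSucc, repl_snoc_last, pc_snoc, Fin.succ_castSucc,
    Fin.coe_castSucc, Fin.val_last,
    pcP_snoc_lt, pcP_snoc_n, pcP_top]
  have hs : ∀ x : Bool, msign (pcP J n + pb x + pb m + pcP J n) = msign (pb x + pb m) := by
    intro x
    calc msign (pcP J n + pb x + pb m + pcP J n)
        = msign (pcP J n) * msign (pcP J n) * (msign (pb x) * msign (pb m)) := by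
          simp only [msign_add]; ring
      _ = msign (pb x) * msign (pb m) := by rw [msign_mul_self, one_mul]
      _ = msign (pb x + pb m) := (msign_add _ _).symm
  simp only [hs]
  ring

noncomputable def KT {n : ℕ} (φ : Cochain (n + 1)) (J : Idx (n + 1)) (i : Bool) (k : Fin n) : ℂ :=
  ∑ j : Bool, msign (pc (repl J k j) + pb i + pcP J k.val) *
      (hC φ (repl J k j) i * dd1 (J k.castSucc) (J k.succ) j)

lemma D_hC_eq {n : ℕ} (φ : Cochain (n + 1)) (J : Idx (n + 1)) (i : Bool) :
    Dmap dd1 (hC φ) J i =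
      (∑ j : Bool, hC φ (fun k => J k.castSucc) j * dd1 j (J (Fin.last n)) i)
      + (∑ j : Bool, msign ((pc (fun k : Fin n => J k.succ) + pb j) * pb (J 0)) *
          (hC φ (fun k => J k.succ) j * dd1 (J 0) j i))
      - ∑ k : Fin n, KT φ J i k := rfl

lemma low_eq {n : ℕ} (φ : Cochain (n + 1)) (J : Idx (n + 1)) (i : Bool) :
    msign (pb i) * (2⁻¹ : ℂ) *
      ∑ a : Bool, (∑ k : Fin n, ∑ j : Bool,
        msign ((pc (repl J k j) + pb a) + pb (!(a.xor i)) + pcP J k.val) *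
          (φ (Fin.snoc (repl J k j) a) (!(a.xor i)) * dd1 (J k.castSucc) (J k.succ) j))
      = - ∑ k : Fin n, KT φ J i k := by
  simp only [Finset.mul_sum]
  rw [Finset.sum_comm, ← Finset.sum_neg_distrib]
  refine Finset.sum_congr rfl (fun k _ => ?_)
  simp only [KT, hC, Fintype.sum_bool]
  cases i <;>
    simp only [msign_add, msign_zero, msign_one, pb_false, pb_true, Bool.xor_false,
      Bool.xor_true, Bool.not_true, Bool.not_false, Bool.false_xor, Bool.true_xor] <;>
    ring

lemma finite_part {n : ℕ} (φ : Cochain (n + 1)) (J : Idx (n + 1)) (i : Bool) :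
    (∑ j : Bool, hC φ (fun k => J k.castSucc) j * dd1 j (J (Fin.last n)) i)
    + (∑ j : Bool, msign ((pc (fun k : Fin n => J k.succ) + pb j) * pb (J 0)) *
        (hC φ (fun k => J k.succ) j * dd1 (J 0) j i))
    + msign (pb i) * (2⁻¹ : ℂ) * (∑ a : Bool,
        ((∑ j : Bool, φ J j * dd1 j a (!(a.xor i)))
        + (∑ j : Bool, msign ((pc (fun k : Fin n => J k.succ) + pb a + pb j) * pb (J 0)) *
            (φ (Fin.snoc (fun k : Fin n => J k.succ) a) j * dd1 (J 0) j (!(a.xor i))))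
        - (∑ j : Bool, msign (pb j + pb (!(a.xor i))) *
            (φ (Fin.snoc (fun k : Fin n => J k.castSucc) j) (!(a.xor i)) *
              dd1 (J (Fin.last n)) a j))))
    = φ J i := by
  generalize J 0 = b0
  generalize J (Fin.last n) = bl
  simp only [hC, Fintype.sum_bool]
  cases i <;> cases b0 <;> cases bl <;>
    simp only [dd1, delta2, msign_add, msign_zero, msign_one, pb_false, pb_true,
      Bool.xor_false, Bool.xor_true, Bool.not_true, Bool.not_false, Bool.false_xor,
      Bool.true_xor, mul_zero, mul_one, zero_add, add_zero, Nat.mul_zero, Nat.mul_one] <;>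
    norm_num <;> ring

lemma Dh_hD {n : ℕ} (φ : Cochain (n + 1)) (J : Idx (n + 1)) (i : Bool) :
    Dmap dd1 (hC φ) J i + hC (Dmap dd1 φ) J i = φ J i := by
  have h3 : hC (Dmap dd1 φ) J i
      = msign (pb i) * (2⁻¹ : ℂ) * (∑ a : Bool,
          ((∑ j : Bool, φ J j * dd1 j a (!(a.xor i)))
          + (∑ j : Bool, msign ((pc (fun k : Fin n => J k.succ) + pb a + pb j) * pb (J 0)) *
              (φ (Fin.snoc (fun k : Fin n => J k.succ) a) j * dd1 (J 0) j (!(a.xor i))))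
          - (∑ j : Bool, msign (pb j + pb (!(a.xor i))) *
              (φ (Fin.snoc (fun k : Fin n => J k.castSucc) j) (!(a.xor i)) *
                dd1 (J (Fin.last n)) a j))))
        + ∑ k : Fin n, KT φ J i k := by
    simp only [hC, Dsnoc]
    rw [Finset.sum_sub_distrib, mul_sub, low_eq]
    ring
  rw [D_hC_eq, h3]
  have h4 := finite_part φ J i
  linear_combination h4


lemma hC_zero {n : ℕ} : hC (0 : Cochain (n + 1)) = 0 := by
  funext J i; simp [hC]

lemma phiF0_ne : phiF 0 ≠ 0 := by
  intro h
  have h1 := congrFun (congrFun h (fun _ => false)) true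
  simp [phiF, bC] at h1

lemma idx0_eq (K L : Idx 0) : K = L := funext fun k => k.elim0

lemma Dmap_phiF0 : Dmap dd1 (phiF 0) = 0 := by
  funext J i
  have hJ : J (Fin.last 0) = J 0 := rfl
  simp only [Dmap, Fintype.sum_bool, Finset.univ_eq_empty, Finset.sum_empty, phiF, bC, hJ]
  have hpc : ∀ K : Idx 0, pc K = 0 := by intro K; simp [pc]
  have he : ∀ K : Idx 0, (K = fun _ => false) := fun K => idx0_eq K _
  simp only [he, hpc, and_true, if_true, true_and, if_false, and_false]
  cases h0 : J 0 <;> cases i <;>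
    simp [dd1, delta2, msign_zero, msign_one, pb_false, pb_true]

lemma Z0 : Zsp dd1 0 = Submodule.span ℂ {phiF 0} := by
  ext φ
  simp only [Zsp, LinearMap.mem_ker, Submodule.mem_span_singleton]
  constructor
  · intro h
    have h0 : Dmap dd1 φ (fun _ => false) true = 0 := by
      have h' : Dmap dd1 φ = 0 := h
      rw [h']; rfl
    have hEe : φ (fun _ => false) false = 0 := by
      simp only [Dmap, Fintype.sum_bool, Finset.univ_eq_empty, Finset.sum_empty] at h0
      have he : ∀ K : Idx 0, (K = fun _ => false) := fun K => idx0_eq K _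
      try simp only [he] at h0
      simp [dd1, delta2, pc, msign_zero, pb_false] at h0
      exact h0
    refine ⟨φ (fun _ => false) true, ?_⟩
    funext K j
    have hK : K = fun _ => false := idx0_eq K _
    subst hK
    cases j <;> simp [phiF, bC, hEe]
  · rintro ⟨c, rfl⟩
    have : Dlin dd1 0 (c • phiF 0) = c • Dlin dd1 0 (phiF 0) := map_smul _ _ _
    rw [this]
    have h2 : Dlin dd1 0 (phiF 0) = 0 := Dmap_phiF0
    rw [h2, smul_zero]

/-- For the simple algebra `d₁ = ψ_e^{ef} − ψ_e^{fe} + ψ_f^{ee} − ψ_f^{ff}`: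
`H⁰(d₁) = ⟨φ_f⟩` is 1-dimensional and `Hⁿ(d₁) = 0` for all `n ≥ 1`. -/
theorem d1_cohomology :
    (Zsp dd1 0 = Submodule.span ℂ {phiF 0})
      ∧ Module.rank ℂ (Hsp dd1 0) = 1
      ∧ ∀ n : ℕ, 1 ≤ n → Zsp dd1 n ≤ Bsp dd1 n := by
  have hB0 : Submodule.comap (Zsp dd1 0).subtype (Bsp dd1 0) = ⊥ := by
    show Submodule.comap (Zsp dd1 0).subtype ⊥ = ⊥
    rw [Submodule.comap_bot, Submodule.ker_subtype]
  refine ⟨Z0, ?_, ?_⟩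
  · have e := Submodule.quotEquivOfEqBot _ hB0
    rw [e.rank_eq]
    have hz : Module.rank ℂ (Zsp dd1 0) = 1 := by
      rw [Z0]
      rw [rank_submodule_eq_one_iff]
      exact ⟨phiF 0, Submodule.mem_span_singleton_self _, phiF0_ne, le_refl _⟩
    exact hz
  · intro n hn φ hφ
    obtain ⟨m, rfl⟩ : ∃ m, n = m + 1 := ⟨n - 1, by omega⟩
    have hker : Dmap dd1 φ = 0 := hφ
    show φ ∈ LinearMap.range (Dlin dd1 m)
    refine ⟨hC φ, ?_⟩
    show Dmap dd1 (hC φ) = φ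
    funext J i
    have := Dh_hD φ J i
    rw [hker, hC_zero] at this
    simpa using this
end

section
/- For the codifferential d₆ = ψ_f^{ee}, the DeCleene map θ = λ^{ef} − λ^{fe} commutes with the operator D_e on the E-component: D_e ∘ θ = θ ∘ D_e, where D_e is the E-component of the Hochschild coboundary [d₆, −] restricted to cochains with values in e, and λ^{I}(φ^J_i) = φ^{IJ}_i prepends the multi-index I. -/
/-- A degree-`n` cochain valued in `e`: the element `Σ_I (ε I)·φ^I_e` of `Eⁿ`. -/
abbrev ECochain (n : ℕ) := Idx n → ℂ

/-- The operator `D_e : Eⁿ → Eⁿ⁺¹`, `D_e(φ^I_e) = (−1)^{|I|} φ^I_e ∘ ψ_f^{ee}`: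
the `E`-valued component of the Hochschild coboundary `[d₆, −]`, with the Koszul
insertion signs of the composition `φ ∘ ψ`. -/
noncomputable def Dehat {n : ℕ} (ε : ECochain n) : ECochain (n + 1) := fun J =>
  ∑ k : Fin n,
    msign (pc (repl J k true) + pcP J k.val) *
      ((if J k.castSucc = false ∧ J k.succ = false then (1 : ℂ) else 0) *
        ε (repl J k true))

/-- The prepending operator `λ^{ab}`, with `λ^{ab}(φ^J_e) = φ^{abJ}_e`. -/
noncomputable def lamPre (a b : Bool) {n : ℕ} (ε : ECochain n) : ECochain (n + 2) :=
  fun J => (if J 0 = a ∧ J 1 = b then (1 : ℂ) else 0) * ε (fun i => J i.succ.succ)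

/-- The DeCleene map `θ = λ^{ef} − λ^{fe}`. -/
noncomputable def theta {n : ℕ} (ε : ECochain n) : ECochain (n + 2) :=
  lamPre false true ε - lamPre true false ε

/-! Prepending two letters shifts both parity counts in every Koszul sign of `D_e` by the same
amount, so `D_e` commutes with each `λ^{ab}` up to the two summands in which `ψ_f^{ee}` hits a
prepended position (`k = 0, 1`). For `θ` these two summands cancel: both vanish unless the
multi-index starts with `eee`, and then they carry the same sign while `θ` contributes `−1`
(through `λ^{fe}`) to the first and `+1` (through `λ^{ef}`) to the second. -/

section

variable {n : ℕ}

lemma pc_succ (J : Idx (n + 1)) : pc J = pb (J 0) + pc (fun i => J i.succ) := by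
  simp only [pc, Fin.sum_univ_succ]

lemma pcP_zero (J : Idx n) : pcP J 0 = 0 := by
  simp [pcP]

lemma pcP_succ (J : Idx (n + 1)) (t : ℕ) :
    pcP J (t + 1) = pb (J 0) + pcP (fun i => J i.succ) t := by
  simp [pcP, Finset.sum_filter, Fin.sum_univ_succ]

lemma msign_add_add_add_self (a b c : ℕ) : msign (a + b + (a + c)) = msign (b + c) := by
  simp only [msign]
  rw [show a + b + (a + c) = 2 * a + (b + c) by ring, pow_add, pow_mul]
  simp

lemma repl_zero (J : Idx (n + 2)) (j : Bool) :
    repl J 0 j = Fin.cons j (fun i => J i.succ.succ) := by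
  funext i
  refine Fin.cases ?_ (fun i => ?_) i <;> simp [repl]

lemma repl_succ (J : Idx (n + 2)) (k : Fin n) (j : Bool) :
    repl J k.succ j = Fin.cons (J 0) (repl (fun i => J i.succ) k j) := by
  funext i
  refine Fin.cases ?_ (fun i => ?_) i <;> simp [repl]

noncomputable def dehatTerm (ε : ECochain n) (J : Idx (n + 1)) (k : Fin n) : ℂ :=
  msign (pc (repl J k true) + pcP J k.val) *
    ((if J k.castSucc = false ∧ J k.succ = false then (1 : ℂ) else 0) * ε (repl J k true))

lemma dehat_apply (ε : ECochain n) (J : Idx (n + 1)) : Dehat ε J = ∑ k, dehatTerm ε J k := rfl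

lemma dehatTerm_succ (η : ECochain (n + 1)) (J : Idx (n + 2)) (k : Fin n) :
    dehatTerm η J k.succ = dehatTerm (fun I => η (Fin.cons (J 0) I)) (fun i => J i.succ) k := by
  simp only [dehatTerm, repl_succ, pc_succ, Fin.cons_zero, Fin.cons_succ, Fin.val_succ, pcP_succ,
    msign_add_add_add_self, ← Fin.succ_castSucc]

lemma dehat_apply_eq_add_dehat_tail (η : ECochain (n + 2)) (J : Idx (n + 3)) :
    Dehat η J = dehatTerm η J 0 + dehatTerm η J 1 +
      Dehat (fun I => η (Fin.cons (J 0) (Fin.cons (J 1) I))) (fun i => J i.succ.succ) := by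
  rw [dehat_apply, Fin.sum_univ_succ, Fin.sum_univ_succ, ← add_assoc, Fin.succ_zero_eq_one]
  simp only [dehatTerm_succ, Fin.succ_zero_eq_one]
  rfl

lemma dehat_const_mul (c : ℂ) (ε : ECochain n) (J : Idx (n + 1)) :
    Dehat (fun I => c * ε I) J = c * Dehat ε J := by
  simp only [dehat_apply, dehatTerm, Finset.mul_sum]
  exact Finset.sum_congr rfl fun k _ => by ring

lemma theta_apply (ε : ECochain n) (J : Idx (n + 2)) :
    theta ε J = ((if J 0 = false ∧ J 1 = true then 1 else 0) -
      (if J 0 = true ∧ J 1 = false then 1 else 0)) * ε (fun i => J i.succ.succ) := by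
  simp only [theta, Pi.sub_apply, lamPre, sub_mul]

lemma dehatTerm_theta_zero_add_one (ε : ECochain n) (J : Idx (n + 3)) :
    dehatTerm (theta ε) J 0 + dehatTerm (theta ε) J 1 = 0 := by
  rw [← Fin.succ_zero_eq_one, dehatTerm_succ]
  simp only [dehatTerm, repl_zero, theta_apply, pc_succ, Fin.cons_zero, Fin.cons_succ,
    Fin.val_zero, pcP_zero]
  cases h0 : J 0 <;> cases h1 : J 1 <;> cases h2 : J 2 <;> simp [pb, h0, h1, h2]

end

/-- For `d₆ = ψ_f^{ee}`, the DeCleene map `θ = λ^{ef} − λ^{fe}` commutes with the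
operator `D_e` on the `E`-complex: `D_e ∘ θ = θ ∘ D_e`. -/
theorem decleene_map_commutes_with_De :
    ∀ (n : ℕ) (ε : ECochain n), Dehat (theta ε) = theta (Dehat ε) := by
  intro n ε
  funext J
  rw [dehat_apply_eq_add_dehat_tail, dehatTerm_theta_zero_add_one, zero_add]
  simp only [theta_apply, Fin.cons_zero, Fin.cons_one, Fin.cons_succ, dehat_const_mul]
end
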